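/- arXiv:1303.6859 — 2 statements merged into one kernel-verified Lean document; each statement's English description precedes it below -/
import Mathlib

section
/- Let N, M, b, c be natural numbers with c > 0, c dividing N, and let S : Fin N → ℂ. Define U_m = ∑_{k=0}^{N-1} S_k · exp(2πi·k·m·b/(c·M)). For each k ∈ {0,...,c-1} define S'(k) : Fin (N·b/c) → ℂ by S'(k)_n = S_{n·c/b + k} if b divides n, and 0 otherwise, and define U'(k)_m = exp(2πi·m·k·b/(c·M)) · ∑_{n=0}^{Nb/c - 1} S'(k)_n · exp(2πi·n·m/M). Then for every m, U_m = ∑_{k=0}^{c-1} U'(k)_m. -/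
/-!
Split the carrier index as `k = j * c + r` with `r < c`. The SEFDM phase of carrier `k` then
factors as the rotation `exp (2πi m r b / (c M))` of branch `r` times the OFDM phase of carrier
`j * b`, and inserting zeros at the indices not divisible by `b` turns the sum over `j` into an
OFDM sum over all `n < (N / c) * b`.
-/

open Real Finset

section Reindexing

variable {A : Type*} [AddCommMonoid A]

theorem Finset.sum_range_mul_eq_sum_sum_mul_add (f : ℕ → A) (c t : ℕ) :
    ∑ i ∈ range (c * t), f i = ∑ r ∈ range c, ∑ j ∈ range t, f (j * c + r) := by
  induction t with
  | zero => simp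
  | succ t ih =>
    rw [Nat.mul_succ, sum_range_add, ih, ← sum_add_distrib]
    refine sum_congr rfl fun r _ => ?_
    rw [sum_range_succ, mul_comm c t]

theorem Finset.sum_range_mul_of_not_dvd_eq_zero {g : ℕ → A} {b : ℕ} (hb : 0 < b)
    (hg : ∀ n, ¬ b ∣ n → g n = 0) (t : ℕ) :
    ∑ n ∈ range (t * b), g n = ∑ j ∈ range t, g (j * b) := by
  rw [mul_comm, sum_range_mul_eq_sum_sum_mul_add, sum_eq_single_of_mem 0 (mem_range.2 hb)]
  · simp
  · intro r hr hr0
    refine sum_eq_zero fun j _ => hg _ fun hdvd => hr0 ?_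
    exact Nat.eq_zero_of_dvd_of_lt ((Nat.dvd_add_right (dvd_mul_left b j)).1 hdvd)
      (mem_range.1 hr)

end Reindexing

theorem Complex.exp_sefdm_phase_eq_mul {c : ℂ} (hc : c ≠ 0) (M m b j r : ℂ) :
    Complex.exp (2 * π * Complex.I * (j * c + r) * m * b / (c * M)) =
      Complex.exp (2 * π * Complex.I * m * r * b / (c * M)) *
        Complex.exp (2 * π * Complex.I * (j * b) * m / M) := by
  rw [← Complex.exp_add]
  congr 1
  rcases eq_or_ne M 0 with rfl | hM
  · simp -- with `x / 0 = 0` all three phases vanish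
  · field_simp
    ring

theorem sefdm_decomposition
    (N M b c : ℕ) (hb : 0 < b) (hc : 0 < c) (hdvd : c ∣ N) (S : ℕ → ℂ)
    (U : ℕ → ℂ)
    (hU : ∀ m, U m = ∑ k ∈ Finset.range N,
      S k * Complex.exp (2 * π * Complex.I * k * m * b / (c * M)))
    (S' : ℕ → ℕ → ℂ)
    (hS' : ∀ k n, S' k n = if b ∣ n then S (n * c / b + k) else 0)
    (U' : ℕ → ℕ → ℂ)
    (hU' : ∀ k m, U' k m = Complex.exp (2 * π * Complex.I * m * k * b / (c * M)) *
      ∑ n ∈ Finset.range (N * b / c), S' k n * Complex.exp (2 * π * Complex.I * n * m / M)) :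
    ∀ m, U m = ∑ k ∈ Finset.range c, U' k m := by
  intro m
  obtain ⟨t, rfl⟩ := hdvd
  have hlen : c * t * b / c = t * b := by rw [mul_assoc, Nat.mul_div_cancel_left _ hc]
  have hS'_zero : ∀ r n, ¬ b ∣ n →
      S' r n * Complex.exp (2 * π * Complex.I * n * m / M) = 0 := fun r n hn => by
    rw [hS', if_neg hn, zero_mul]
  rw [hU, sum_range_mul_eq_sum_sum_mul_add]
  refine sum_congr rfl fun r _ => ?_
  rw [hU', hlen, sum_range_mul_of_not_dvd_eq_zero hb (hS'_zero r), mul_sum]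
  refine sum_congr rfl fun j _ => ?_
  rw [hS', if_pos (dvd_mul_left b j), Nat.mul_right_comm j b c, Nat.mul_div_cancel _ hb]
  push_cast
  rw [Complex.exp_sefdm_phase_eq_mul (Nat.cast_ne_zero.2 hc.ne')]
  ring
end

section
/- Let b, c, N, M be positive naturals with b·N/c an integer, and consider the SEFDM carrier matrix C (size N × M) with entries c_{nm} = exp(2πi·n·m·b/(c·M)). Let D be the (N·b/c) × M matrix with d_{nm} = exp(2πi·n·m/M) and for k ∈ {0,...,c-1} let R(k) be the M × M diagonal matrix with entries exp(2πi·m·k·b/(c·M)). Then for each n ∈ {0,...,N-1}, writing n = q·c + k with 0 ≤ k < c, the n-th row of C equals the (q·b)-th row of the matrix D·R(k). -/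
open Real

/-! Writing `n = q c + k`, the SEFDM phase `n m b / (c M)` splits as `(q b) m / M + m k b / (c M)`:
the first summand is the OFDM phase of row `q b`, the second the phase of the rotation `R(k)`, and
right multiplication by a diagonal matrix only rescales the columns. -/

theorem sefdm_phase_split {K : Type*} [Field K] {q c k b m M : K} (hc : c ≠ 0) :
    (q * c + k) * m * b / (c * M) = q * b * m / M + m * k * b / (c * M) := by
  rw [← mul_div_mul_left (q * b * m) M hc, ← add_div]
  ring_nf

theorem sefdm_rows_are_rotated_ofdm_rows_general
    (b c N M : ℕ)
    (C : ℕ → ℕ → ℂ)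
    (hC : ∀ n m, C n m = Complex.exp (2 * π * Complex.I * n * m * b / (c * M)))
    (D : ℕ → ℕ → ℂ)
    (hD : ∀ n m, D n m = Complex.exp (2 * π * Complex.I * n * m / M))
    (R : ℕ → ℕ → ℕ → ℂ)
    (hR : ∀ k j m, R k j m =
      if j = m then Complex.exp (2 * π * Complex.I * m * k * b / (c * M)) else 0) :
    ∀ n < N, ∀ q k : ℕ, k < c → n = q * c + k →
      ∀ m < M, C n m = ∑ j ∈ Finset.range M, D (q * b) j * R k j m := by
  intro n _ q k hk rfl m hm
  have hc : (c : ℂ) ≠ 0 := by exact_mod_cast (k.zero_le.trans_lt hk).ne'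
  simp only [hR, mul_ite, mul_zero, Finset.sum_ite_eq', Finset.mem_range, if_pos hm, hC, hD,
    ← Complex.exp_add]
  congr 1
  push_cast
  linear_combination
    2 * π * Complex.I * sefdm_phase_split (K := ℂ) (q := q) (k := k) (b := b) (m := m) (M := M) hc

theorem sefdm_rows_are_rotated_ofdm_rows
    (b c N M : ℕ) (hb : 0 < b) (hc : 0 < c) (hN : 0 < N) (hM : 0 < M)
    (hdvd : c ∣ N)
    (C : ℕ → ℕ → ℂ)
    (hC : ∀ n m, C n m = Complex.exp (2 * π * Complex.I * n * m * b / (c * M)))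
    (D : ℕ → ℕ → ℂ)
    (hD : ∀ n m, D n m = Complex.exp (2 * π * Complex.I * n * m / M))
    (R : ℕ → ℕ → ℕ → ℂ)
    (hR : ∀ k j m, R k j m =
      if j = m then Complex.exp (2 * π * Complex.I * m * k * b / (c * M)) else 0) :
    ∀ n < N, ∀ q k : ℕ, k < c → n = q * c + k →
      ∀ m < M, C n m = ∑ j ∈ Finset.range M, D (q * b) j * R k j m :=
  sefdm_rows_are_rotated_ofdm_rows_general b c N M C hC D hD R hR
end
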